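/- Let (𝔊, ·, [·,·]) be a transposed Poisson superalgebra. Then for all homogeneous h, x, y, z ∈ 𝔊: (−1)^{|x||z|} [h·x, [y,z]] + (−1)^{|x||y|} [h·y, [z,x]] + (−1)^{|y||z|} [h·z, [x,y]] = 0. -/

import Mathlib

/-- The sign `(-1)^{ij}` in a field `K`, for parities `i j : ZMod 2`. -/
def sg (K : Type*) [Field K] (i j : ZMod 2) : K := (-1) ^ (i.val * j.val)

/-! Applying the compatibility condition twice gives
`4 h·[x,[y,z]] = 2 [h·x,[y,z]] ± [x,[h·y,z]] ± [x,[y,h·z]]`. Summed cyclically with the Koszul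
signs, the left side is `4 h·J(x,y,z) = 0` for the super Jacobiator `J`, and the right side is
twice the wanted sum `T` plus six further terms. Together with `T` these six terms make up
`J(h·x,y,z)`, `J(x,h·y,z)` and `J(x,y,h·z)` (up to signs), which vanish too; hence `T = 0`. -/

theorem sg_comm (K : Type*) [Field K] (i j : ZMod 2) : sg K i j = sg K j i := by
  rw [sg, sg, Nat.mul_comm]

theorem sg_mul_self (K : Type*) [Field K] (i j : ZMod 2) : sg K i j * sg K i j = 1 := by
  rw [sg, ← pow_add, Even.neg_one_pow ⟨_, rfl⟩]

theorem sg_add_left (K : Type*) [Field K] (i j k : ZMod 2) :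
    sg K (i + j) k = sg K i k * sg K j k := by
  have parity : ((i + j).val * k.val) % 2 = (i.val * k.val + j.val * k.val) % 2 := by
    fin_cases i <;> fin_cases j <;> fin_cases k <;> rfl
  rw [sg, sg, sg, ← pow_add, neg_one_pow_eq_pow_mod_two, parity, ← neg_one_pow_eq_pow_mod_two]

theorem sg_add_right (K : Type*) [Field K] (i j k : ZMod 2) :
    sg K i (j + k) = sg K i j * sg K i k := by
  rw [sg_comm, sg_add_left, sg_comm K j i, sg_comm K k i]

section

variable {K V : Type*} [Field K] [AddCommGroup V] [Module K V] {𝒢 : ZMod 2 → Submodule K V}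
  {m b : V →ₗ[K] V →ₗ[K] V}

theorem super_jacobi_cyclic
    (hb_mem : ∀ (i j : ZMod 2) (x y : V), x ∈ 𝒢 i → y ∈ 𝒢 j → b x y ∈ 𝒢 (i + j))
    (hskew : ∀ (i j : ZMod 2) (x y : V), x ∈ 𝒢 i → y ∈ 𝒢 j →
      b x y = -(sg K i j • b y x))
    (hjacobi : ∀ (i j k : ZMod 2) (x y z : V), x ∈ 𝒢 i → y ∈ 𝒢 j → z ∈ 𝒢 k →
      b x (b y z) = b (b x y) z + sg K i j • b y (b x z))
    {i j k : ZMod 2} {x y z : V} (hx : x ∈ 𝒢 i) (hy : y ∈ 𝒢 j) (hz : z ∈ 𝒢 k) :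
    sg K i k • b x (b y z) + sg K i j • b y (b z x) + sg K j k • b z (b x y) = 0 := by
  have hxy_z := hskew (i + j) k _ _ (hb_mem i j x y hx hy) hz
  have hxz := hskew i k x z hx hz
  rw [hjacobi i j k x y z hx hy hz, hxy_z, hxz, map_neg, map_smul, sg_add_left]
  match_scalars
  · linear_combination (-sg K j k) * sg_mul_self K i k
  · linear_combination (-sg K i j) * sg_mul_self K i k

theorem four_smul_mul_bracket_bracket
    (hb_mem : ∀ (i j : ZMod 2) (x y : V), x ∈ 𝒢 i → y ∈ 𝒢 j → b x y ∈ 𝒢 (i + j))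
    (hcompat : ∀ (i j k : ZMod 2) (x y z : V), x ∈ 𝒢 i → y ∈ 𝒢 j → z ∈ 𝒢 k →
      (2 : K) • m z (b x y) = b (m z x) y + sg K i k • b x (m z y))
    {l i j k : ZMod 2} {h x y z : V}
    (hh : h ∈ 𝒢 l) (hx : x ∈ 𝒢 i) (hy : y ∈ 𝒢 j) (hz : z ∈ 𝒢 k) :
    (4 : K) • m h (b x (b y z)) = (2 : K) • b (m h x) (b y z)
      + sg K i l • b x (b (m h y) z) + (sg K i l * sg K j l) • b x (b y (m h z)) := by
  have hyz := hcompat j k l y z h hy hz hh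
  calc (4 : K) • m h (b x (b y z)) = (2 : K) • ((2 : K) • m h (b x (b y z))) := by module
    _ = (2 : K) • b (m h x) (b y z) + sg K i l • b x ((2 : K) • m h (b y z)) := by
      rw [hcompat i (j + k) l x (b y z) h hx (hb_mem j k y z hy hz) hh, map_smul]
      module
    _ = _ := by
      rw [hyz, map_add, map_smul]
      module

end

theorem tpsa_identity_three_general
    {K V : Type*} [Field K] [AddCommGroup V] [Module K V]
    (𝒢 : ZMod 2 → Submodule K V)
    (m : V →ₗ[K] V →ₗ[K] V) (b : V →ₗ[K] V →ₗ[K] V)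
    (hm_mem : ∀ (i j : ZMod 2) (x y : V), x ∈ 𝒢 i → y ∈ 𝒢 j → m x y ∈ 𝒢 (i + j))
    (hb_mem : ∀ (i j : ZMod 2) (x y : V), x ∈ 𝒢 i → y ∈ 𝒢 j → b x y ∈ 𝒢 (i + j))
    (hskew : ∀ (i j : ZMod 2) (x y : V), x ∈ 𝒢 i → y ∈ 𝒢 j →
      b x y = -(sg K i j • b y x))
    (hjacobi : ∀ (i j k : ZMod 2) (x y z : V), x ∈ 𝒢 i → y ∈ 𝒢 j → z ∈ 𝒢 k →
      b x (b y z) = b (b x y) z + sg K i j • b y (b x z))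
    (hcompat : ∀ (i j k : ZMod 2) (x y z : V), x ∈ 𝒢 i → y ∈ 𝒢 j → z ∈ 𝒢 k →
      (2 : K) • m z (b x y) = b (m z x) y + sg K i k • b x (m z y))
    (l i j k : ZMod 2) (h x y z : V)
    (hh : h ∈ 𝒢 l) (hx : x ∈ 𝒢 i) (hy : y ∈ 𝒢 j) (hz : z ∈ 𝒢 k) :
    sg K i k • b (m h x) (b y z) + sg K i j • b (m h y) (b z x)
      + sg K j k • b (m h z) (b x y) = 0 := by
  have jac_xyz := congrArg ((4 : K) • m h) (super_jacobi_cyclic hb_mem hskew hjacobi hx hy hz)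
  simp only [LinearMap.smul_apply, map_add, map_smul, map_zero] at jac_xyz
  rw [four_smul_mul_bracket_bracket hb_mem hcompat hh hx hy hz,
    four_smul_mul_bracket_bracket hb_mem hcompat hh hy hz hx,
    four_smul_mul_bracket_bracket hb_mem hcompat hh hz hx hy] at jac_xyz
  have jac_hx := super_jacobi_cyclic hb_mem hskew hjacobi (hm_mem l i h x hh hx) hy hz
  have jac_hy := super_jacobi_cyclic hb_mem hskew hjacobi hx (hm_mem l j h y hh hy) hz
  have jac_hz := super_jacobi_cyclic hb_mem hskew hjacobi hx hy (hm_mem l k h z hh hz)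
  linear_combination (norm := skip)
    jac_xyz - sg K k l • jac_hx - sg K i l • jac_hy - sg K j l • jac_hz
  simp only [sg_add_left, sg_add_right, sg_comm K l]
  match_scalars <;> grind [sg_mul_self]

/-- in a transposed Poisson superalgebra `(V, m, b)` over a field `K` of
characteristic zero, for all homogeneous `h, x, y, z` of parities `l, i, j, k`:
`(−1)^{|x||z|}[h·x,[y,z]] + (−1)^{|x||y|}[h·y,[z,x]] + (−1)^{|y||z|}[h·z,[x,y]] = 0`. -/
theorem tpsa_identity_three
    {K V : Type*} [Field K] [CharZero K] [AddCommGroup V] [Module K V]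
    (𝒢 : ZMod 2 → Submodule K V) [DirectSum.Decomposition 𝒢]
    (m : V →ₗ[K] V →ₗ[K] V) (b : V →ₗ[K] V →ₗ[K] V)
    (hm_mem : ∀ (i j : ZMod 2) (x y : V), x ∈ 𝒢 i → y ∈ 𝒢 j → m x y ∈ 𝒢 (i + j))
    (hassoc : ∀ x y z : V, m (m x y) z = m x (m y z))
    (hcomm : ∀ (i j : ZMod 2) (x y : V), x ∈ 𝒢 i → y ∈ 𝒢 j → m x y = sg K i j • m y x)
    (hb_mem : ∀ (i j : ZMod 2) (x y : V), x ∈ 𝒢 i → y ∈ 𝒢 j → b x y ∈ 𝒢 (i + j))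
    (hskew : ∀ (i j : ZMod 2) (x y : V), x ∈ 𝒢 i → y ∈ 𝒢 j →
      b x y = -(sg K i j • b y x))
    (hjacobi : ∀ (i j k : ZMod 2) (x y z : V), x ∈ 𝒢 i → y ∈ 𝒢 j → z ∈ 𝒢 k →
      b x (b y z) = b (b x y) z + sg K i j • b y (b x z))
    (hcompat : ∀ (i j k : ZMod 2) (x y z : V), x ∈ 𝒢 i → y ∈ 𝒢 j → z ∈ 𝒢 k →
      (2 : K) • m z (b x y) = b (m z x) y + sg K i k • b x (m z y))
    (l i j k : ZMod 2) (h x y z : V)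
    (hh : h ∈ 𝒢 l) (hx : x ∈ 𝒢 i) (hy : y ∈ 𝒢 j) (hz : z ∈ 𝒢 k) :
    sg K i k • b (m h x) (b y z) + sg K i j • b (m h y) (b z x)
      + sg K j k • b (m h z) (b x y) = 0 :=
  tpsa_identity_three_general 𝒢 m b hm_mem hb_mem hskew hjacobi hcompat l i j k h x y z hh hx hy hz
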